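/- arXiv:2605.27248 — 2 statements merged into one kernel-verified Lean document; each statement's English description precedes it below -/
import Mathlib

section
/- Fix m ≥ 2 and n ≥ 2, and consider n-run OofA designs on m components with no replicated runs. Let D* be such a design maximizing k_min, write k* = k_min(D*), and suppose that among all such designs attaining k_min = k*, D* minimizes ν_{k*}. Then for every n-run design D with distinct runs satisfying either k_min(D) < k*, or k_min(D) = k* and ν_{k*}(D) > ν_{k*}(D*), there exists θ₀ > 0 such that det Σ_{D*}(θ) > det Σ_D(θ) for all θ ≥ θ₀. -/
/-!
In the Leibniz expansion of `det Σ_D(θ)` the term of `σ` is `sign σ · exp (-θ c_D(σ))` with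
`c_D(σ) = ∑ i, k(x_{σ i}, x_i)`. The identity contributes `1`; any other `σ` moves at least two
points, each at cost at least `k = k_min(D)`, so `c_D(σ) ≥ 2k`, with equality exactly for the
transpositions of the `ν_k(D)` pairs at distance `k`. Hence
`det Σ_D(θ) = 1 - ν_k(D) e^{-2kθ} + o(e^{-2kθ})`, and the same expansion, with the same `k`,
holds for `D*` because `k ≤ k_min(D*)`. Either alternative of the hypothesis gives
`ν_k(D*) < ν_k(D)` (in the first one `ν_k(D*) = 0`), so `det Σ_{D*} - det Σ_D` is eventually
positive.
-/

/-- A run (addition order) on `m` components: position `r` receives component `x r`.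
The position map `π_x` is `x.symm`. -/
abbrev Run (m : ℕ) := Equiv.Perm (Fin m)

/-- Kendall tau distance between two runs. -/
def kendall {m : ℕ} (x y : Run m) : ℕ :=
  (Finset.univ.filter fun p : Fin m × Fin m =>
    p.1 < p.2 ∧
      (((x.symm p.1 : ℕ) : ℤ) - ((x.symm p.2 : ℕ) : ℤ)) *
        (((y.symm p.1 : ℕ) : ℤ) - ((y.symm p.2 : ℕ) : ℤ)) < 0).card

/-- Minimum pairwise Kendall tau distance of a design. -/
noncomputable def kmin {m n : ℕ} (D : Fin n → Run m) : ℕ :=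
  sInf {v : ℕ | ∃ i j : Fin n, i < j ∧ kendall (D i) (D j) = v}

/-- `ν_r(D)`: the number of pairs `i < j` with `k(x_i, x_j) = r`. -/
def nuDist {m n : ℕ} (D : Fin n → Run m) (r : ℕ) : ℕ :=
  (Finset.univ.filter fun p : Fin n × Fin n =>
    p.1 < p.2 ∧ kendall (D p.1) (D p.2) = r).card

/-- The Mallows-kernel correlation matrix `Σ_D(θ)` with entries `exp(−θ k(x_i,x_j))`. -/
noncomputable def SigmaMat {m n : ℕ} (D : Fin n → Run m) (θ : ℝ) :
    Matrix (Fin n) (Fin n) ℝ :=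
  fun i j => Real.exp (-θ * (kendall (D i) (D j) : ℝ))

open Finset Filter Topology Equiv

theorem swap_injOn_lt {α : Type*} [LinearOrder α] [Fintype α] :
    Set.InjOn (fun p : α × α => swap p.1 p.2) {p | p.1 < p.2} := by
  intro p hp q hq h
  have hsupp := congrArg Perm.support h
  simp only [Perm.support_swap hp.ne, Perm.support_swap hq.ne] at hsupp
  rw [← coe_inj, coe_pair, coe_pair, Set.pair_eq_pair_iff] at hsupp
  rcases hsupp with ⟨h1, h2⟩ | ⟨h1, h2⟩
  · exact Prod.ext h1 h2
  · exact absurd (h1 ▸ h2 ▸ hq : p.2 < p.1) hp.not_gt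

theorem tendsto_exp_neg_mul_natCast (c : ℕ) :
    Tendsto (fun θ : ℝ => Real.exp (-θ * c)) atTop (𝓝 (if c = 0 then 1 else 0)) := by
  rcases eq_or_ne c 0 with rfl | hc
  · simp
  · rw [if_neg hc]
    refine (Real.tendsto_exp_neg_atTop_nhds_zero.comp
      (tendsto_id.atTop_mul_const (by positivity : (0 : ℝ) < c))).congr fun θ => ?_
    simp [neg_mul]

section Kendall

variable {m : ℕ}

theorem kendall_comm (x y : Run m) : kendall x y = kendall y x := by
  unfold kendall
  congr 1
  exact filter_congr fun p _ => by rw [mul_comm]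

theorem kendall_self (x : Run m) : kendall x x = 0 := by
  rw [kendall, card_eq_zero, filter_eq_empty_iff]
  exact fun _ _ h => (mul_self_nonneg _).not_gt h.2

theorem eq_of_kendall_eq_zero {x y : Run m} (h : kendall x y = 0) : x = y := by
  rw [kendall, card_eq_zero, filter_eq_empty_iff] at h
  have hagree : ∀ a b : Fin m, 0 ≤ (((x.symm a : ℕ) : ℤ) - ((x.symm b : ℕ) : ℤ)) *
      (((y.symm a : ℕ) : ℤ) - ((y.symm b : ℕ) : ℤ)) := by
    have hlt : ∀ a b : Fin m, a < b → 0 ≤ (((x.symm a : ℕ) : ℤ) - ((x.symm b : ℕ) : ℤ)) *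
        (((y.symm a : ℕ) : ℤ) - ((y.symm b : ℕ) : ℤ)) :=
      fun a b hab => not_lt.1 fun hneg => h (mem_univ (a, b)) ⟨hab, hneg⟩
    intro a b
    rcases lt_trichotomy a b with hab | rfl | hab
    · exact hlt a b hab
    · simp
    · linarith [hlt b a hab]
  -- `y⁻¹ ∘ x` preserves the order of every pair, hence is the identity of `Fin m`.
  have hmono : StrictMono (x.trans y.symm) := by
    intro r s hrs
    have hprod := hagree (x r) (x s)
    simp only [symm_apply_apply] at hprod
    have hrs' : ((r : ℕ) : ℤ) < ((s : ℕ) : ℤ) := by exact_mod_cast hrs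
    have hne : y.symm (x r) ≠ y.symm (x s) := by simpa using hrs.ne
    rcases hne.lt_or_gt with hlt | hgt
    · exact hlt
    · have : ((y.symm (x s) : ℕ) : ℤ) < ((y.symm (x r) : ℕ) : ℤ) := by exact_mod_cast hgt
      nlinarith
  have hid : ⇑(x.trans y.symm) = id :=
    (hmono.range_inj strictMono_id).1 (by simp)
  exact Equiv.ext fun r => by simpa using congrArg y (congrFun hid r)

theorem kendall_pos {x y : Run m} (h : x ≠ y) : 0 < kendall x y :=
  Nat.pos_of_ne_zero fun h0 => h (eq_of_kendall_eq_zero h0)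

end Kendall

section Design

variable {m n : ℕ}

theorem kmin_le_kendall (D : Fin n → Run m) {i j : Fin n} (h : i ≠ j) :
    kmin D ≤ kendall (D i) (D j) := by
  rcases h.lt_or_gt with h | h
  · exact Nat.sInf_le ⟨i, j, h, rfl⟩
  · rw [kendall_comm]
    exact Nat.sInf_le ⟨j, i, h, rfl⟩

theorem exists_kendall_eq_kmin (hn : 2 ≤ n) (D : Fin n → Run m) :
    ∃ i j : Fin n, i < j ∧ kendall (D i) (D j) = kmin D :=
  Nat.sInf_mem (s := {v | ∃ i j : Fin n, i < j ∧ kendall (D i) (D j) = v})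
    ⟨_, ⟨0, by omega⟩, ⟨1, by omega⟩, Fin.mk_lt_mk.2 zero_lt_one, rfl⟩

theorem kmin_pos (hn : 2 ≤ n) {D : Fin n → Run m} (hD : Function.Injective D) :
    0 < kmin D := by
  obtain ⟨i, j, hij, hk⟩ := exists_kendall_eq_kmin hn D
  exact hk ▸ kendall_pos (hD.ne hij.ne)

theorem nuDist_kmin_pos (hn : 2 ≤ n) (D : Fin n → Run m) : 0 < nuDist D (kmin D) := by
  obtain ⟨i, j, hij, hk⟩ := exists_kendall_eq_kmin hn D
  exact card_pos.2 ⟨(i, j), mem_filter.2 ⟨mem_univ _, hij, hk⟩⟩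

theorem nuDist_eq_zero_of_lt_kmin {D : Fin n → Run m} {r : ℕ} (h : r < kmin D) :
    nuDist D r = 0 := by
  rw [nuDist, card_eq_zero, filter_eq_empty_iff]
  rintro p - ⟨hp, rfl⟩
  exact h.not_ge (kmin_le_kendall D hp.ne)

end Design

section Determinant

variable {m n : ℕ}

def kendallCost (D : Fin n → Run m) (σ : Perm (Fin n)) : ℕ :=
  ∑ i, kendall (D (σ i)) (D i)

theorem det_SigmaMat (D : Fin n → Run m) (θ : ℝ) :
    (SigmaMat D θ).det =
      ∑ σ : Perm (Fin n), ((Perm.sign σ : ℤ) : ℝ) * Real.exp (-θ * kendallCost D σ) := by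
  rw [Matrix.det_apply']
  refine sum_congr rfl fun σ _ => ?_
  rw [kendallCost, Nat.cast_sum, mul_sum, Real.exp_sum]
  rfl

theorem kendallCost_one (D : Fin n → Run m) : kendallCost D 1 = 0 := by
  simp [kendallCost, kendall_self]

theorem kendallCost_swap (D : Fin n → Run m) {i j : Fin n} (h : i ≠ j) :
    kendallCost D (swap i j) = 2 * kendall (D i) (D j) := by
  rw [kendallCost, ← sum_subset (subset_univ {i, j})]
  · rw [sum_pair h, swap_apply_left, swap_apply_right, kendall_comm (D j), two_mul]
  · intro x _ hx
    simp only [mem_insert, mem_singleton, not_or] at hx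
    rw [swap_apply_of_ne_of_ne hx.1 hx.2, kendall_self]

theorem card_support_mul_le_kendallCost {D : Fin n → Run m} {k : ℕ}
    (hsep : ∀ i j, i ≠ j → k ≤ kendall (D i) (D j)) (σ : Perm (Fin n)) :
    #σ.support * k ≤ kendallCost D σ := by
  rw [kendallCost, ← sum_subset (subset_univ σ.support)
    fun i _ hi => by rw [Perm.notMem_support.1 hi, kendall_self]]
  exact card_nsmul_le_sum _ _ k fun i hi => hsep _ _ (Perm.mem_support.1 hi)

theorem two_mul_le_kendallCost {D : Fin n → Run m} {k : ℕ}
    (hsep : ∀ i j, i ≠ j → k ≤ kendall (D i) (D j)) {σ : Perm (Fin n)} (hσ : σ ≠ 1) :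
    2 * k ≤ kendallCost D σ :=
  (Nat.mul_le_mul_right k (Perm.two_le_card_support_of_ne_one hσ)).trans
    (card_support_mul_le_kendallCost hsep σ)

theorem kendallCost_eq_two_mul_iff {D : Fin n → Run m} {k : ℕ}
    (hsep : ∀ i j, i ≠ j → k ≤ kendall (D i) (D j)) (hk : 0 < k) {σ : Perm (Fin n)} :
    kendallCost D σ = 2 * k ↔ ∃ i j, i < j ∧ kendall (D i) (D j) = k ∧ σ = swap i j := by
  constructor
  · intro hσ
    have hne : σ ≠ 1 := by rintro rfl; rw [kendallCost_one] at hσ; omega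
    have hcard : #σ.support ≤ 2 := by
      have := card_support_mul_le_kendallCost hsep σ
      by_contra! h
      nlinarith
    obtain ⟨i, j, hij, rfl⟩ := Perm.card_support_eq_two.1
      (hcard.antisymm (Perm.two_le_card_support_of_ne_one hne))
    rw [kendallCost_swap D hij, Nat.mul_left_cancel_iff two_pos] at hσ
    rcases hij.lt_or_gt with hlt | hgt
    · exact ⟨i, j, hlt, hσ, rfl⟩
    · exact ⟨j, i, hgt, kendall_comm (D i) (D j) ▸ hσ, swap_comm i j⟩
  · rintro ⟨i, j, hij, hk, rfl⟩
    rw [kendallCost_swap D hij.ne, hk]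

theorem sum_sign_kendallCost_eq_two_mul {D : Fin n → Run m} {k : ℕ}
    (hsep : ∀ i j, i ≠ j → k ≤ kendall (D i) (D j)) (hk : 0 < k) :
    ∑ σ : Perm (Fin n), (if kendallCost D σ = 2 * k then ((Perm.sign σ : ℤ) : ℝ) else 0) =
      -(nuDist D k : ℝ) := by
  have hfilter : univ.filter (fun σ => kendallCost D σ = 2 * k) =
      (univ.filter fun p : Fin n × Fin n => p.1 < p.2 ∧ kendall (D p.1) (D p.2) = k).image
        fun p => swap p.1 p.2 := by
    ext σ
    simp [kendallCost_eq_two_mul_iff hsep hk, and_assoc, @eq_comm _ σ]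
  rw [← sum_filter, hfilter, sum_image fun p hp q hq => swap_injOn_lt (mem_filter.1 hp).2.1
    (mem_filter.1 hq).2.1]
  rw [sum_congr rfl fun p hp => by rw [Perm.sign_swap (mem_filter.1 hp).2.1.ne]]
  simp [nuDist]

theorem tendsto_det_SigmaMat_sub_one_mul_exp {D : Fin n → Run m} {k : ℕ}
    (hsep : ∀ i j, i ≠ j → k ≤ kendall (D i) (D j)) (hk : 0 < k) :
    Tendsto (fun θ => ((SigmaMat D θ).det - 1) * Real.exp (2 * k * θ)) atTop
      (𝓝 (-(nuDist D k : ℝ))) := by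
  have hexpand : ∀ θ : ℝ, ((SigmaMat D θ).det - 1) * Real.exp (2 * k * θ) =
      ∑ σ ∈ univ.erase 1, ((Perm.sign σ : ℤ) : ℝ) *
        Real.exp (-θ * ((kendallCost D σ - 2 * k : ℕ) : ℝ)) := by
    intro θ
    rw [det_SigmaMat, ← add_sum_erase _ _ (mem_univ 1), kendallCost_one]
    simp only [Perm.sign_one, Units.val_one, Int.cast_one, CharP.cast_eq_zero, mul_zero,
      Real.exp_zero, one_mul, add_sub_cancel_left, sum_mul]
    refine sum_congr rfl fun σ hσ => ?_
    rw [Nat.cast_sub (two_mul_le_kendallCost hsep (ne_of_mem_erase hσ)), mul_assoc,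
      ← Real.exp_add]
    push_cast
    ring_nf
  have hlimit : ∑ σ ∈ univ.erase 1, ((Perm.sign σ : ℤ) : ℝ) *
      (if kendallCost D σ - 2 * k = 0 then 1 else 0) = -(nuDist D k : ℝ) := by
    rw [← sum_sign_kendallCost_eq_two_mul hsep hk, ← sum_erase univ (a := 1)
      (by rw [kendallCost_one, if_neg (by omega)])]
    refine sum_congr rfl fun σ hσ => ?_
    have := two_mul_le_kendallCost hsep (ne_of_mem_erase hσ)
    split_ifs <;> first | omega | simp
  rw [← hlimit]
  exact (tendsto_finsetSum _ fun σ _ => (tendsto_exp_neg_mul_natCast _).const_mul _).congr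
    fun θ => (hexpand θ).symm

end Determinant

theorem stmt11_general {m n : ℕ} (hn : 2 ≤ n)
    (Dstar : Fin n → Run m)
    (D : Fin n → Run m) (hD : Function.Injective D)
    (hcond : kmin D < kmin Dstar ∨
      (kmin D = kmin Dstar ∧ nuDist Dstar (kmin Dstar) < nuDist D (kmin Dstar))) :
    ∃ θ₀ : ℝ, 0 < θ₀ ∧ ∀ θ : ℝ, θ₀ ≤ θ →
      (SigmaMat Dstar θ).det > (SigmaMat D θ).det := by
  set k := kmin D
  have hk : 0 < k := kmin_pos hn hD
  have hkstar : k ≤ kmin Dstar := hcond.elim le_of_lt fun h => h.1.le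
  have hnu_lt : nuDist Dstar k < nuDist D k := by
    rcases hcond with hlt | ⟨heq, hlt⟩
    · rw [nuDist_eq_zero_of_lt_kmin hlt]
      exact nuDist_kmin_pos hn D
    · rwa [heq]
  have hlim := (tendsto_det_SigmaMat_sub_one_mul_exp
    (fun i j h => hkstar.trans (kmin_le_kendall Dstar h)) hk).sub
    (tendsto_det_SigmaMat_sub_one_mul_exp (fun i j h => kmin_le_kendall D h) hk)
  have hpos : (0 : ℝ) < -(nuDist Dstar k : ℝ) - -(nuDist D k : ℝ) := by
    have : (nuDist Dstar k : ℝ) < nuDist D k := by exact_mod_cast hnu_lt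
    linarith
  obtain ⟨θ₀, hθ₀⟩ := eventually_atTop.1
    ((hlim.eventually (eventually_gt_nhds hpos)).and (eventually_gt_atTop 0))
  refine ⟨θ₀, (hθ₀ θ₀ le_rfl).2, fun θ hθ => ?_⟩
  have hdiff := (hθ₀ θ hθ).1
  rw [← sub_mul, sub_sub_sub_cancel_right, mul_pos_iff_of_pos_right (Real.exp_pos _)] at hdiff
  exact sub_pos.1 hdiff

/-- A maximin Kendall tau distance design with the fewest closest pairs is asymptotically
D-optimal under the Gaussian process model with the Mallows kernel. -/
theorem stmt11 {m n : ℕ} (hm : 2 ≤ m) (hn : 2 ≤ n)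
    (Dstar : Fin n → Run m) (hstar : Function.Injective Dstar)
    (hmaximin : ∀ D : Fin n → Run m, Function.Injective D → kmin D ≤ kmin Dstar)
    (hnu : ∀ D : Fin n → Run m, Function.Injective D → kmin D = kmin Dstar →
      nuDist Dstar (kmin Dstar) ≤ nuDist D (kmin Dstar))
    (D : Fin n → Run m) (hD : Function.Injective D)
    (hcond : kmin D < kmin Dstar ∨
      (kmin D = kmin Dstar ∧ nuDist Dstar (kmin Dstar) < nuDist D (kmin Dstar))) :
    ∃ θ₀ : ℝ, 0 < θ₀ ∧ ∀ θ : ℝ, θ₀ ≤ θ →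
      (SigmaMat Dstar θ).det > (SigmaMat D θ).det :=
  stmt11_general hn Dstar D hD hcond
end

section
/- Let D = H ∪ H̃ be an n-run foldover OofA design on m components with n = 2h, h ≥ 2, and all n runs distinct, where H̃ consists of the reverses of the runs in H. Then the minimum pairwise Kendall tau distance satisfies 1 ≤ k_min(D) ≤ ⌊m(m−1)/4⌋. -/
/-- The foldover (reverse) of a run: `x̃ r = x (m+1-r)` (positions reversed). -/
def revRun {m : ℕ} (x : Run m) : Run m := Fin.revPerm.trans x

/-- The `2h`-run foldover design `D = H ∪ H̃` generated by a half-design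
`H = (x_1, …, x_h)`: its first `h` rows are the `x_i` and its last `h` rows
are their reverses `x̃_i`. -/
def foldover {m h : ℕ} (H : Fin h → Run m) : Fin (h + h) → Run m :=
  Fin.append H fun i => revRun (H i)

/-- Average pairwise Kendall tau distance of an `n`-run design. -/
noncomputable def kave {m n : ℕ} (D : Fin n → Run m) : ℝ :=
  (∑ p ∈ Finset.univ.filter (fun p : Fin n × Fin n => p.1 < p.2),
      (kendall (D p.1) (D p.2) : ℝ)) / (n.choose 2 : ℝ)

/-- Second moment of the pairwise Kendall tau distances of an `n`-run design. -/
noncomputable def km2 {m n : ℕ} (D : Fin n → Run m) : ℝ :=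
  (∑ p ∈ Finset.univ.filter (fun p : Fin n × Fin n => p.1 < p.2),
      (kendall (D p.1) (D p.2) : ℝ) ^ 2) / (n.choose 2 : ℝ)

lemma kendall_eq_zero {m : ℕ} {x y : Run m} (hk : kendall x y = 0) : x = y := by
  have hemp : ∀ p : Fin m × Fin m, p.1 < p.2 →
      ¬ ((((x.symm p.1 : ℕ) : ℤ) - ((x.symm p.2 : ℕ) : ℤ)) *
        (((y.symm p.1 : ℕ) : ℤ) - ((y.symm p.2 : ℕ) : ℤ)) < 0) := by
    intro p hp hneg
    have := Finset.card_eq_zero.mp hk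
    have hmem : p ∈ (Finset.univ.filter fun p : Fin m × Fin m =>
      p.1 < p.2 ∧
        (((x.symm p.1 : ℕ) : ℤ) - ((x.symm p.2 : ℕ) : ℤ)) *
          (((y.symm p.1 : ℕ) : ℤ) - ((y.symm p.2 : ℕ) : ℤ)) < 0) := by
      simp [hp, hneg]
    rw [this] at hmem
    exact absurd hmem (Finset.notMem_empty p)
  have key : ∀ a b : Fin m, x.symm a < x.symm b → y.symm a < y.symm b := by
    intro a b hab
    have hne : a ≠ b := fun h => by simp [h] at hab
    have hyne : y.symm a ≠ y.symm b := fun h => hne (y.symm.injective h)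
    rcases lt_or_gt_of_ne (a := a) (b := b) hne with hlt | hgt
    · have := hemp (a, b) hlt
      by_contra hcon
      push_neg at hcon
      have hy : y.symm b < y.symm a := lt_of_le_of_ne hcon (Ne.symm hyne)
      apply this
      have h1 : ((x.symm a : ℕ) : ℤ) - ((x.symm b : ℕ) : ℤ) < 0 := by
        have := (Fin.lt_iff_val_lt_val).mp hab; push_cast; omega
      have h2 : (0:ℤ) < ((y.symm a : ℕ) : ℤ) - ((y.symm b : ℕ) : ℤ) := by
        have := (Fin.lt_iff_val_lt_val).mp hy; push_cast; omega
      exact mul_neg_of_neg_of_pos h1 h2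
    · have := hemp (b, a) hgt
      by_contra hcon
      push_neg at hcon
      have hy : y.symm b < y.symm a := lt_of_le_of_ne hcon (Ne.symm hyne)
      apply this
      have h1 : (0:ℤ) < ((x.symm b : ℕ) : ℤ) - ((x.symm a : ℕ) : ℤ) := by
        have := (Fin.lt_iff_val_lt_val).mp hab; push_cast; omega
      have h2 : ((y.symm b : ℕ) : ℤ) - ((y.symm a : ℕ) : ℤ) < 0 := by
        have := (Fin.lt_iff_val_lt_val).mp hy; push_cast; omega
      exact mul_neg_of_pos_of_neg h1 h2
  have hsm : StrictMono (fun p : Fin m => y.symm (x p)) := by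
    intro p q hpq
    apply key
    simpa using hpq
  have hid : StrictMono (id : Fin m → Fin m) := strictMono_id
  have hrange : Set.range (fun p : Fin m => y.symm (x p)) = Set.range (id : Fin m → Fin m) := by
    simp [Set.range_id, Set.range_comp, (x.surjective.comp x.symm.surjective)]
    exact (y.symm.surjective.comp x.surjective).range_eq
  have : (fun p : Fin m => y.symm (x p)) = (id : Fin m → Fin m) := (hsm.range_inj hid).mp hrange
  apply Equiv.ext
  intro c
  have h2 := congrFun this c
  simp at h2
  calc x c = y (y.symm (x c)) := (y.apply_symm_apply _).symm
    _ = y c := by rw [h2]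

lemma card_lt_pairs (m : ℕ) :
    (Finset.univ.filter fun p : Fin m × Fin m => p.1 < p.2).card = m.choose 2 := by
  have hswap : (Finset.univ.filter fun p : Fin m × Fin m => p.1 < p.2).card
      = (Finset.univ.filter fun p : Fin m × Fin m => p.2 < p.1).card := by
    apply Finset.card_bij' (fun p _ => Prod.swap p) (fun p _ => Prod.swap p)
    · intro a ha; simp at ha ⊢; exact ha
    · intro a ha; simp at ha ⊢; exact ha
    · intro a _; simp
    · intro a _; simp
  have hsplit : (Finset.univ.filter fun p : Fin m × Fin m => p.1 < p.2).card
      + (Finset.univ.filter fun p : Fin m × Fin m => ¬ p.1 < p.2).card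
      = m * m := by
    rw [Finset.card_filter_add_card_filter_not]
    simp [Fintype.card_prod]
  have hsplit2 : (Finset.univ.filter fun p : Fin m × Fin m => p.2 < p.1).card
      + (Finset.univ.filter fun p : Fin m × Fin m => p.1 = p.2).card
      = (Finset.univ.filter fun p : Fin m × Fin m => ¬ p.1 < p.2).card := by
    rw [← Finset.card_union_of_disjoint]
    · congr 1
      ext p
      simp only [Finset.mem_union, Finset.mem_filter, Finset.mem_univ, true_and]
      constructor
      · rintro (hlt | heq)
        · exact not_lt_of_gt hlt
        · exact fun hl => absurd hl (by simp [heq])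
      · intro hnl
        rcases lt_or_eq_of_le (not_lt.mp hnl) with h' | h'
        · exact Or.inl h'
        · exact Or.inr h'.symm
    · rw [Finset.disjoint_left]
      intro p hp hq
      simp only [Finset.mem_filter, Finset.mem_univ, true_and] at hp hq
      exact absurd hp (by simp [hq])
  have hdiag : (Finset.univ.filter fun p : Fin m × Fin m => p.1 = p.2).card = m := by
    rw [show (Finset.univ.filter fun p : Fin m × Fin m => p.1 = p.2)
        = Finset.univ.image (fun a : Fin m => (a, a)) by
      ext p
      simp only [Finset.mem_filter, Finset.mem_univ, true_and, Finset.mem_image]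
      constructor
      · intro hpe; exact ⟨p.1, Prod.ext_iff.mpr ⟨rfl, hpe⟩⟩
      · rintro ⟨a, rfl⟩; rfl]
    rw [Finset.card_image_of_injective _ (fun a b hab => (Prod.ext_iff.mp hab).1)]
    simp
  have hPm : m * m = m * (m - 1) + m := by
    cases m with
    | zero => simp
    | succ k => simp only [Nat.succ_sub_one]; ring
  rw [hPm] at hsplit
  rw [Nat.choose_two_right]
  set P := m * (m - 1) with hP
  omega

lemma revRun_symm_apply {m : ℕ} (y : Run m) (c : Fin m) :
    (revRun y).symm c = Fin.rev (y.symm c) := by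
  simp [revRun]

lemma kendall_add_rev {m : ℕ} (x y : Run m) :
    kendall x y + kendall x (revRun y) = m.choose 2 := by
  unfold kendall
  have hrw : ∀ p : Fin m × Fin m, p.1 < p.2 →
      ((((x.symm p.1 : ℕ) : ℤ) - ((x.symm p.2 : ℕ) : ℤ)) *
        ((((revRun y).symm p.1 : ℕ) : ℤ) - (((revRun y).symm p.2 : ℕ) : ℤ)) < 0
      ↔ ¬ ((((x.symm p.1 : ℕ) : ℤ) - ((x.symm p.2 : ℕ) : ℤ)) *
        (((y.symm p.1 : ℕ) : ℤ) - ((y.symm p.2 : ℕ) : ℤ)) < 0)) := by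
    intro p hp
    rw [revRun_symm_apply, revRun_symm_apply]
    have h1 : ((Fin.rev (y.symm p.1) : ℕ) : ℤ) = (m : ℤ) - 1 - ((y.symm p.1 : ℕ) : ℤ) := by
      rw [Fin.val_rev]
      have := (y.symm p.1).isLt
      push_cast
      omega
    have h2 : ((Fin.rev (y.symm p.2) : ℕ) : ℤ) = (m : ℤ) - 1 - ((y.symm p.2 : ℕ) : ℤ) := by
      rw [Fin.val_rev]
      have := (y.symm p.2).isLt
      push_cast
      omega
    rw [h1, h2]
    have hne : p.1 ≠ p.2 := ne_of_lt hp
    have hx : ((x.symm p.1 : ℕ) : ℤ) - ((x.symm p.2 : ℕ) : ℤ) ≠ 0 := by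
      intro hc
      apply hne
      apply x.symm.injective
      have : (x.symm p.1 : ℕ) = (x.symm p.2 : ℕ) := by omega
      exact Fin.ext this
    have hy : ((y.symm p.1 : ℕ) : ℤ) - ((y.symm p.2 : ℕ) : ℤ) ≠ 0 := by
      intro hc
      apply hne
      apply y.symm.injective
      have : (y.symm p.1 : ℕ) = (y.symm p.2 : ℕ) := by omega
      exact Fin.ext this
    constructor
    · intro hlt hlt2
      nlinarith
    · intro hge
      rcases (mul_ne_zero hx hy).lt_or_gt with hl | hl
      · exact absurd hl hge
      · nlinarith
  have e1 : (Finset.univ.filter fun p : Fin m × Fin m =>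
      p.1 < p.2 ∧
        (((x.symm p.1 : ℕ) : ℤ) - ((x.symm p.2 : ℕ) : ℤ)) *
          ((((revRun y).symm p.1 : ℕ) : ℤ) - (((revRun y).symm p.2 : ℕ) : ℤ)) < 0)
      = (Finset.univ.filter fun p : Fin m × Fin m =>
      p.1 < p.2 ∧ ¬ ((((x.symm p.1 : ℕ) : ℤ) - ((x.symm p.2 : ℕ) : ℤ)) *
          (((y.symm p.1 : ℕ) : ℤ) - ((y.symm p.2 : ℕ) : ℤ)) < 0)) := by
    apply Finset.filter_congr
    intro p _
    constructor
    · rintro ⟨hp, hq⟩; exact ⟨hp, (hrw p hp).mp hq⟩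
    · rintro ⟨hp, hq⟩; exact ⟨hp, (hrw p hp).mpr hq⟩
  rw [e1, ← Finset.filter_filter, ← Finset.filter_filter,
    Finset.card_filter_add_card_filter_not, card_lt_pairs]


/-- The minimum pairwise Kendall tau distance of a nonreplicated foldover design
satisfies `1 ≤ k_min(D) ≤ ⌊m(m−1)/4⌋`. -/
theorem stmt14 {m h : ℕ} (hm : 2 ≤ m) (hh : 2 ≤ h) (H : Fin h → Run m)
    (hdist : Function.Injective (foldover H)) :
    1 ≤ kmin (foldover H) ∧ kmin (foldover H) ≤ m * (m - 1) / 4 := by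
  set D := foldover H with hD
  set S := {v : ℕ | ∃ i j : Fin (h + h), i < j ∧ kendall (D i) (D j) = v} with hS
  have h0 : (0 : ℕ) < h := by omega
  have h1 : (1 : ℕ) < h := by omega
  set i0 : Fin (h + h) := Fin.castAdd h ⟨0, h0⟩ with hi0
  set i1 : Fin (h + h) := Fin.castAdd h ⟨1, h1⟩ with hi1
  set j1 : Fin (h + h) := Fin.natAdd h ⟨1, h1⟩ with hj1
  have hD0 : D i0 = H ⟨0, h0⟩ := by
    rw [hD, hi0]; exact Fin.append_left _ _ _
  have hD1 : D i1 = H ⟨1, h1⟩ := by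
    rw [hD, hi1]; exact Fin.append_left _ _ _
  have hDj : D j1 = revRun (H ⟨1, h1⟩) := by
    rw [hD, hj1]; exact Fin.append_right _ _ _
  have hlt01 : i0 < i1 := by
    rw [Fin.lt_def]; simp [hi0, hi1]
  have hlt0j : i0 < j1 := by
    rw [Fin.lt_def]; simp [hi0, hj1]
  have hmemA : kendall (D i0) (D i1) ∈ S := ⟨i0, i1, hlt01, rfl⟩
  have hmemB : kendall (D i0) (D j1) ∈ S := ⟨i0, j1, hlt0j, rfl⟩
  have hkminA : kmin D ≤ kendall (D i0) (D i1) := Nat.sInf_le hmemA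
  have hkminB : kmin D ≤ kendall (D i0) (D j1) := Nat.sInf_le hmemB
  have hne : S.Nonempty := ⟨_, hmemA⟩
  constructor
  · -- lower bound
    rw [Nat.one_le_iff_ne_zero]
    intro hzero
    have hmem : kmin D ∈ S := Nat.sInf_mem hne
    obtain ⟨i, j, hij, hkij⟩ := hmem
    rw [hzero] at hkij
    have : D i = D j := kendall_eq_zero hkij
    exact absurd (hdist this) (ne_of_lt hij)
  · -- upper bound
    have hsum : kendall (D i0) (D i1) + kendall (D i0) (D j1) = m.choose 2 := by
      rw [hD1, hDj, hD0]
      exact kendall_add_rev _ _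
    have h2k : kmin D * 2 ≤ m.choose 2 := by omega
    have : kmin D ≤ m.choose 2 / 2 := (Nat.le_div_iff_mul_le (by norm_num)).mpr h2k
    calc kmin D ≤ m.choose 2 / 2 := this
      _ = m * (m - 1) / 4 := by
        rw [Nat.choose_two_right, Nat.div_div_eq_div_mul]
end
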